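/- arXiv:1406.7155 — 2 statements merged into one kernel-verified Lean document; each statement's English description precedes it below -/
import Mathlib

section
/- The mirror shift is not sofic: there is no SFT Y over any finite alphabet and block map f with f(Y) equal to the mirror shift M. -/
open Pointwise

/-- The shift map `σ^v`. -/
def shiftv {A : Type*} (v : ℤ × ℤ) (x : ℤ × ℤ → A) : ℤ × ℤ → A := fun w => x (w + v)

/-- The pattern with domain `D` and values given by `P` occurs in `x` at `v`. -/
def OccursAt {A : Type*} (D : Set (ℤ × ℤ)) (P : ℤ × ℤ → A) (x : ℤ × ℤ → A)
    (v : ℤ × ℤ) : Prop := ∀ w ∈ D, x (v + w) = P w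

/-- The set of configurations avoiding every pattern in `F`
(patterns are pairs: a domain and a value assignment). -/
def XF {A : Type*} (F : Set (Set (ℤ × ℤ) × ((ℤ × ℤ) → A))) : Set ((ℤ × ℤ) → A) :=
  {x | ∀ p ∈ F, ∀ v, ¬ OccursAt p.1 p.2 x v}

/-- The mirror shift over the alphabet `Fin 3 = {0, 1, #}` (with `#` encoded as `2`):
the `#`-symbol propagates vertically, no two `#`'s occur in the same row at distinct
columns, and symbols at equal distances left and right of a `#` agree. -/
def Mirror : Set ((ℤ × ℤ) → Fin 3) :=
  {x | (∀ v : ℤ × ℤ, x v = 2 ↔ x (v + (0, 1)) = 2) ∧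
       (∀ v : ℤ × ℤ, ∀ n : ℤ, 0 < n → ¬ (x v = 2 ∧ x (v + (n, 0)) = 2)) ∧
       (∀ v : ℤ × ℤ, ∀ n : ℤ, 0 < n → x v = 2 → x (v + (-n, 0)) = x (v + (n, 0)))}

/-! If the mirror shift were the image of an SFT under a block map, let `R` bound both the
forbidden patterns and the neighbourhood of the block map. Place a square of side `N` to the
right of a `#`-column and, for each of its `2 ^ N²` binary fillings, pick an SFT preimage of the
mirror configuration it determines. Since the SFT constraints have range `R`, a preimage can be
cut along a frame of width `2R` around the square and its inside replaced by another preimage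
that agrees with it on the frame. The frame has only `O(RN)` cells, so by pigeonhole two
different fillings have preimages agreeing there; the glued point is mapped to a configuration
whose left half mirrors one filling while the square carries the other. -/

noncomputable def square (c : ℤ × ℤ) (k : ℕ) : Finset (ℤ × ℤ) :=
  Finset.Icc (c.1 - k) (c.1 + k) ×ˢ Finset.Icc (c.2 - k) (c.2 + k)

theorem mem_square {c w : ℤ × ℤ} {k : ℕ} :
    w ∈ square c k ↔ c.1 - k ≤ w.1 ∧ w.1 ≤ c.1 + k ∧ c.2 - k ≤ w.2 ∧ w.2 ≤ c.2 + k := by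
  rw [square, Finset.mem_product, Finset.mem_Icc, Finset.mem_Icc, and_assoc]

theorem card_square (c : ℤ × ℤ) (k : ℕ) : (square c k).card = (2 * k + 1) ^ 2 := by
  rw [square, Finset.card_product, Int.card_Icc, Int.card_Icc, sq]
  congr 1 <;> omega

theorem square_mono (c : ℤ × ℤ) {k l : ℕ} (h : k ≤ l) : square c k ⊆ square c l := by
  intro w
  simp only [mem_square]
  omega

theorem Set.Finite.exists_subset_square {s : Set (ℤ × ℤ)} (hs : s.Finite) :
    ∃ R : ℕ, s ⊆ square 0 R := by
  obtain ⟨a, ha⟩ := hs.bddBelow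
  obtain ⟨b, hb⟩ := hs.bddAbove
  refine ⟨(-a.1).toNat + (-a.2).toNat + b.1.toNat + b.2.toNat, fun w hw => ?_⟩
  have hlo := ha hw
  have hhi := hb hw
  rw [Prod.le_def] at hlo hhi
  rw [Finset.mem_coe, mem_square, Prod.fst_zero, Prod.snd_zero]
  omega

theorem pow_lt_two_pow_sq {K a b N : ℕ} (hN : K * (a + b) < N) :
    K ^ (a * N + b) < 2 ^ (N ^ 2) := by
  have hN1 : 0 < N := by omega
  have hexp : K * (a * N + b) < N ^ 2 :=
    calc K * (a * N + b) ≤ K * ((a + b) * N) := by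
          rw [add_mul]
          exact Nat.mul_le_mul_left K (Nat.add_le_add_left (Nat.le_mul_of_pos_right b hN1) _)
      _ < N * N := by rw [← mul_assoc]; exact Nat.mul_lt_mul_of_pos_right hN hN1
      _ = N ^ 2 := (sq N).symm
  calc K ^ (a * N + b) ≤ (2 ^ K) ^ (a * N + b) := Nat.pow_le_pow_left Nat.lt_two_pow_self.le _
    _ = 2 ^ (K * (a * N + b)) := (pow_mul 2 K _).symm
    _ < 2 ^ (N ^ 2) := Nat.pow_lt_pow_right one_lt_two hexp

theorem card_square_sdiff_square (c : ℤ × ℤ) (m R : ℕ) :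
    (square c (m + 3 * R) \ square c (m + R)).card = 8 * R * (2 * m + 1) + 32 * R ^ 2 := by
  rw [Finset.card_sdiff_of_subset (square_mono c (by omega)), card_square, card_square]
  exact Nat.sub_eq_of_eq_add (by ring)

theorem piecewise_mem_XF {A : Type*} {F : Set (Set (ℤ × ℤ) × (ℤ × ℤ → A))}
    {S T : Finset (ℤ × ℤ)} (hST : ∀ p ∈ F, ∀ v, ∀ w₀ ∈ p.1, v + w₀ ∈ S → ∀ w ∈ p.1, v + w ∈ T)
    {x y : ℤ × ℤ → A} (hx : x ∈ XF F) (hy : y ∈ XF F) (hxy : ∀ w ∈ T, w ∉ S → x w = y w) :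
    T.piecewise y x ∈ XF F := by
  intro p hp v hocc
  by_cases hS : ∃ w₀ ∈ p.1, v + w₀ ∈ S
  · obtain ⟨w₀, hw₀, hvw₀⟩ := hS
    refine hy p hp v fun w hw => ?_
    rw [← hocc w hw, Finset.piecewise_eq_of_mem _ _ _ (hST p hp v w₀ hw₀ hvw₀ w hw)]
  · push Not at hS
    refine hx p hp v fun w hw => ?_
    rw [← hocc w hw]
    by_cases hT : v + w ∈ T
    · rw [Finset.piecewise_eq_of_mem _ _ _ hT, hxy _ hT (hS w hw)]
    · rw [Finset.piecewise_eq_of_notMem _ _ _ hT]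

theorem blockMap_apply_congr {A Γ : Type*} {f : (ℤ × ℤ → A) → ℤ × ℤ → Γ} {D : Finset (ℤ × ℤ)}
    {Floc : ({d // d ∈ D} → A) → Γ} (hf : ∀ x v, f x v = Floc (fun d => x (v + d.1)))
    {x y : ℤ × ℤ → A} {v : ℤ × ℤ} (h : ∀ d ∈ D, x (v + d) = y (v + d)) : f x v = f y v := by
  rw [hf, hf]
  exact congrArg Floc (funext fun d => h d.1 d.2)

theorem exists_mem_XF_exchange {A Γ ι : Type*} [Fintype A] [Fintype ι]
    {F : Set (Set (ℤ × ℤ) × (ℤ × ℤ → A))} {f : (ℤ × ℤ → A) → ℤ × ℤ → Γ} {D : Finset (ℤ × ℤ)}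
    {Floc : ({d // d ∈ D} → A) → Γ} (hf : ∀ x v, f x v = Floc (fun d => x (v + d.1))) {R : ℕ}
    (hF : ∀ p ∈ F, ∀ w ∈ p.1, w ∈ square 0 R) (hD : ∀ d ∈ D, d ∈ square 0 R)
    (y : ι → ℤ × ℤ → A) (hy : ∀ i, y i ∈ XF F) (c : ℤ × ℤ) (m : ℕ)
    (hcard : Fintype.card A ^ (8 * R * (2 * m + 1) + 32 * R ^ 2) < Fintype.card ι) :
    ∃ i j, i ≠ j ∧ ∃ z ∈ XF F, (∀ w ∉ square c (m + 4 * R), f z w = f (y i) w) ∧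
      ∀ w ∈ square c m, f z w = f (y j) w := by
  classical
  set S := square c (m + R)
  set T := square c (m + 3 * R)
  obtain ⟨i, j, hij, hframe⟩ := Fintype.exists_ne_map_eq_of_card_lt
    (fun i (w : {w // w ∈ T \ S}) => y i w)
    (by rwa [Fintype.card_fun, Fintype.card_coe, card_square_sdiff_square])
  refine ⟨i, j, hij, T.piecewise (y j) (y i),
    piecewise_mem_XF (S := S) ?_ (hy i) (hy j) ?_, ?_, ?_⟩
  · intro p hp v w₀ hw₀ hvw₀ w hw
    have h₀ := mem_square.1 (hF p hp w₀ hw₀)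
    have h₁ := mem_square.1 (hF p hp w hw)
    have h₂ := mem_square.1 hvw₀
    simp only [T, mem_square, Prod.fst_add, Prod.snd_add, Prod.fst_zero, Prod.snd_zero]
      at h₀ h₁ h₂ ⊢
    omega
  · intro w hwT hwS
    exact congrFun hframe ⟨w, Finset.mem_sdiff.2 ⟨hwT, hwS⟩⟩
  · intro w hw
    refine blockMap_apply_congr hf fun d hd => Finset.piecewise_eq_of_notMem _ _ _ ?_
    have hd := mem_square.1 (hD d hd)
    rw [mem_square] at hw
    simp only [T, mem_square, Prod.fst_add, Prod.snd_add, Prod.fst_zero, Prod.snd_zero] at hd ⊢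
    omega
  · intro w hw
    refine blockMap_apply_congr hf fun d hd => Finset.piecewise_eq_of_mem _ _ _ ?_
    have hd := mem_square.1 (hD d hd)
    rw [mem_square] at hw
    simp only [T, mem_square, Prod.fst_add, Prod.snd_add, Prod.fst_zero, Prod.snd_zero] at hd ⊢
    omega

def mirrorOf (g : ℤ × ℤ → Fin 2) : ℤ × ℤ → Fin 3 :=
  fun w => if w.1 = 0 then 2 else (g (|w.1|, w.2)).castSucc

theorem mirrorOf_eq_two_iff {g : ℤ × ℤ → Fin 2} {w : ℤ × ℤ} : mirrorOf g w = 2 ↔ w.1 = 0 := by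
  unfold mirrorOf
  split_ifs with h
  · exact iff_of_true rfl h
  · exact iff_of_false (Fin.castSucc_lt_last _).ne h

theorem mirrorOf_of_pos {g : ℤ × ℤ → Fin 2} {w : ℤ × ℤ} (hw : 0 < w.1) :
    mirrorOf g w = (g w).castSucc := by
  rw [mirrorOf, if_neg hw.ne', abs_of_pos hw]

theorem mirrorOf_neg_fst {g : ℤ × ℤ → Fin 2} {i j : ℤ} (hi : 0 < i) :
    mirrorOf g (-i, j) = (g (i, j)).castSucc := by
  rw [mirrorOf, if_neg (neg_ne_zero.2 hi.ne'), abs_neg, abs_of_pos hi]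

theorem mirrorOf_mem_Mirror (g : ℤ × ℤ → Fin 2) : mirrorOf g ∈ Mirror := by
  refine ⟨fun v => ?_, fun v n hn => ?_, fun v n hn hv => ?_⟩
  · simp [mirrorOf_eq_two_iff]
  · simp only [mirrorOf_eq_two_iff, Prod.fst_add]
    omega
  · rw [mirrorOf_eq_two_iff] at hv
    simp [mirrorOf, hv, hn.ne']

theorem eq_of_mem_Mirror {x : ℤ × ℤ → Fin 3} (hx : x ∈ Mirror) {g g' : ℤ × ℤ → Fin 2}
    (hleft : ∀ w : ℤ × ℤ, w.1 ≤ 0 → x w = mirrorOf g w) {w : ℤ × ℤ} (hw : 0 < w.1)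
    (hright : x w = mirrorOf g' w) : g w = g' w := by
  have hwall : x (0, w.2) = 2 := by rw [hleft _ le_rfl, mirrorOf_eq_two_iff]
  have hreflect := hx.2.2 (0, w.2) w.1 hw hwall
  simp only [Prod.mk_add_mk, zero_add, add_zero] at hreflect
  rw [hleft _ (by simp only [Left.neg_nonpos_iff]; exact hw.le), mirrorOf_neg_fst hw, hright,
    mirrorOf_of_pos hw] at hreflect
  exact Fin.castSucc_injective _ hreflect

/-- the mirror shift is not sofic: it is not the image of any SFT
(over any finite alphabet) under a block map. -/
theorem mirror_not_sofic :
    ¬ ∃ (B : Type) (_ : Fintype B)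
        (F : Set (Set (ℤ × ℤ) × ((ℤ × ℤ) → B)))
        (f : ((ℤ × ℤ) → B) → ((ℤ × ℤ) → Fin 3))
        (D : Finset (ℤ × ℤ)) (Floc : ({d // d ∈ D} → B) → Fin 3),
      F.Finite ∧ (∀ p ∈ F, p.1.Finite) ∧
      (∀ x v, f x v = Floc (fun d => x (v + d.1))) ∧
      f '' XF F = Mirror := by
  classical
  rintro ⟨B, _, F, f, D, Floc, hFfin, hFdom, hf, himg⟩
  obtain ⟨R, hR⟩ := ((hFfin.biUnion hFdom).union D.finite_toSet).exists_subset_square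
  set m := Fintype.card B * (8 * R + 32 * R ^ 2)
  set c : ℤ × ℤ := (m + 4 * R + 1, 0)
  let fill (Q : {w // w ∈ square c m} → Fin 2) (w : ℤ × ℤ) : Fin 2 :=
    if h : w ∈ square c m then Q ⟨w, h⟩ else 0
  have hlift : ∀ Q, mirrorOf (fill Q) ∈ f '' XF F := fun Q => himg ▸ mirrorOf_mem_Mirror (fill Q)
  choose y hyF hyf using hlift
  obtain ⟨Q, Q', hne, z, hz, hleft, hcore⟩ := exists_mem_XF_exchange hf
    (fun p hp w hw => hR (Or.inl (Set.mem_biUnion hp hw))) (fun d hd => hR (Or.inr hd)) y hyF c m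
    (by rw [Fintype.card_fun, Fintype.card_coe, card_square, Fintype.card_fin]
        exact pow_lt_two_pow_sq (by omega))
  have hzM : f z ∈ Mirror := himg ▸ ⟨z, hz, rfl⟩
  refine hne (funext fun w => ?_)
  have hw := mem_square.1 w.2
  simp only [c] at hw
  have hQQ' := eq_of_mem_Mirror hzM (g := fill Q) (g' := fill Q')
    (fun v hv => (hleft v (by simp only [mem_square, c]; omega)).trans (by rw [hyf]))
    (show 0 < w.1.1 by omega) ((hcore w w.2).trans (by rw [hyf]))
  simpa [fill, w.2] using hQQ'
end

section
/- Configurations of the mirror shift satisfy the mirror property: if x ∈ M and x(c, r) = # for some column c and row r, then x(c, r') = # for all rows r', and for every n ≥ 1 and every row r', x(c − n, r') = x(c + n, r'). -/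
open Pointwise

theorem Int.forall_of_iff_add_one {p : ℤ → Prop} (hp : ∀ k, p k ↔ p (k + 1)) {a : ℤ}
    (ha : p a) (b : ℤ) : p b := by
  induction b using Int.inductionOn' (b := a) with
  | zero => exact ha
  | succ k _ hk => exact (hp k).mp hk
  | pred k _ hk => exact (hp (k - 1)).mpr (by rwa [sub_add_cancel])

namespace Mirror

variable {x : ℤ × ℤ → Fin 3}

theorem apply_eq_two_iff_add_one (hx : x ∈ Mirror) (c r : ℤ) :
    x (c, r) = 2 ↔ x (c, r + 1) = 2 := by
  simpa using hx.1 (c, r)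

theorem column_eq_two (hx : x ∈ Mirror) {c r : ℤ} (h : x (c, r) = 2) (r' : ℤ) :
    x (c, r') = 2 :=
  Int.forall_of_iff_add_one (p := fun r => x (c, r) = 2) (apply_eq_two_iff_add_one hx c) h r'

theorem apply_sub_eq_apply_add (hx : x ∈ Mirror) {c r : ℤ} (h : x (c, r) = 2) {n : ℤ}
    (hn : 0 < n) : x (c - n, r) = x (c + n, r) := by
  simpa [sub_eq_add_neg] using hx.2.2 (c, r) n hn h

end Mirror

/-- configurations of the mirror shift satisfy the mirror property:
a `#` at column `c` forces a whole column of `#`'s at column `c`, and the columns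
`c - n` and `c + n` agree in every row, for every `n ≥ 1`. -/
theorem mirror_property (x : (ℤ × ℤ) → Fin 3) (hx : x ∈ Mirror) (c r : ℤ)
    (h : x (c, r) = 2) :
    (∀ r' : ℤ, x (c, r') = 2) ∧
    (∀ n : ℤ, 1 ≤ n → ∀ r' : ℤ, x (c - n, r') = x (c + n, r')) :=
  ⟨Mirror.column_eq_two hx h, fun _ hn r' =>
    Mirror.apply_sub_eq_apply_add hx (Mirror.column_eq_two hx h r') hn⟩
end
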